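/- For every hard-core configuration σ on the 2K×3L triangular grid Λ and every horizontal stripe S, the number of particles of σ in S is at most 2L (equivalently, the energy difference ΔH_S(σ) = 2L − Σ_{v∈S} σ(v) is nonnegative); moreover, ΔH_S(σ) = 0 if and only if σ has a horizontal bridge in S, i.e., σ agrees on S with one of a, b, c. -/
import Mathlib


open Finset

variable (K L : ℕ) [NeZero K] [NeZero L]

/-- Vertices of the `2K × 3L` triangular grid: pairs `(i,j) ∈ (ℤ/2K) × (ℤ/6L)` with `i+j` even. -/
abbrev Vert (K L : ℕ) [NeZero K] [NeZero L] : Type :=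
  {p : ZMod (2 * K) × ZMod (6 * L) // (p.1.val + p.2.val) % 2 = 0}

/-- Adjacency in the triangular grid with periodic boundary conditions. -/
abbrev Adj (v w : Vert K L) : Prop :=
  (w.1.1 = v.1.1 ∧ (w.1.2 = v.1.2 + 2 ∨ w.1.2 = v.1.2 - 2)) ∨
  ((w.1.1 = v.1.1 + 1 ∨ w.1.1 = v.1.1 - 1) ∧ (w.1.2 = v.1.2 + 1 ∨ w.1.2 = v.1.2 - 1))

/-- A particle configuration on the grid. -/
abbrev Cfg (K L : ℕ) [NeZero K] [NeZero L] : Type := Vert K L → Bool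

/-- Hard-core condition: no two adjacent occupied sites. -/
abbrev HardCore (σ : Cfg K L) : Prop :=
  ∀ v w : Vert K L, Adj K L v w → ¬(σ v = true ∧ σ w = true)

/-- Number of particles of a configuration. -/
def nParticles (σ : Cfg K L) : ℕ := (univ.filter fun v => σ v = true).card

/-- The energy (Hamiltonian) `H(σ) = -Σ_v σ(v)`. -/
def energy (σ : Cfg K L) : ℤ := -(nParticles K L σ : ℤ)

/-- The configuration `a`: indicator of `Λ_a` (columns `j ≡ 0 (mod 3)`). -/
def confA : Cfg K L := fun v => decide (v.1.2.val % 3 = 0)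

/-- The configuration `b`: indicator of `Λ_b` (columns `j ≡ 1 (mod 3)`). -/
def confB : Cfg K L := fun v => decide (v.1.2.val % 3 = 1)

/-- The configuration `c`: indicator of `Λ_c` (columns `j ≡ 2 (mod 3)`). -/
def confC : Cfg K L := fun v => decide (v.1.2.val % 3 = 2)

/-- A path in the energy landscape: a finite sequence of hard-core configurations,
consecutive ones differing in at most one vertex. -/
structure HCPath (σ σ' : Cfg K L) where
  n : ℕ
  ω : Fin (n + 1) → Cfg K L
  first : ω 0 = σ
  last : ω (Fin.last n) = σ'
  hc : ∀ i, HardCore K L (ω i)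
  step : ∀ i : Fin n,
    ((univ : Finset (Vert K L)).filter fun v => ω i.castSucc v ≠ ω i.succ v).card ≤ 1

/-- Height of a path: maximal energy along it. -/
noncomputable def pathHeight {σ σ' : Cfg K L} (p : HCPath K L σ σ') : ℤ :=
  Finset.univ.sup' Finset.univ_nonempty fun i => energy K L (p.ω i)

/-- Communication height `Φ(σ,σ')`: minimal height over all paths from `σ` to `σ'`. -/
noncomputable def commHeight (σ σ' : Cfg K L) : ℤ :=
  sInf {h : ℤ | ∃ p : HCPath K L σ σ', pathHeight K L p = h}

/-- The horizontal stripe `S_i = r_{2i} ∪ r_{2i+1}`. -/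
abbrev inHStripe (i : ℕ) (v : Vert K L) : Prop :=
  v.1.1 = ((2 * i : ℕ) : ZMod (2 * K)) ∨ v.1.1 = ((2 * i + 1 : ℕ) : ZMod (2 * K))

/-- The vertical stripe `C_j = c_j ∪ c_{j+1} ∪ c_{j+2}` (column indices mod `6L`). -/
abbrev inVStripe (j : ℕ) (v : Vert K L) : Prop :=
  v.1.2 = ((j : ℕ) : ZMod (6 * L)) ∨ v.1.2 = ((j + 1 : ℕ) : ZMod (6 * L)) ∨
    v.1.2 = ((j + 2 : ℕ) : ZMod (6 * L))

/-- Two configurations agree on a region. -/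
def agreesOn (P : Vert K L → Prop) (σ τ : Cfg K L) : Prop := ∀ v, P v → σ v = τ v


private def gg (F : ℕ → Bool) (j : ℕ) : ℕ := if F j = true then 1 else 0

private lemma block_expand (F : ℕ → Bool) (s : ℕ) :
    ∑ j ∈ Ico s (s+3), gg F j = gg F s + gg F (s+1) + gg F (s+2) := by
  rw [Finset.sum_Ico_eq_sum_range]
  have h3 : s + 3 - s = 3 := by omega
  rw [h3]
  simp [Finset.sum_range_succ]

private lemma block_le (F : ℕ → Bool)
    (h1 : ∀ j, F j = true → F (j+1) = false)
    (h2 : ∀ j, F j = true → F (j+2) = false) (s : ℕ) :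
    ∑ j ∈ Ico s (s+3), gg F j ≤ 1 := by
  rw [block_expand]
  have e1 := h1 s
  have e2 := h2 s
  have e3 : F (s+1) = true → F (s+2) = false := by
    have := h1 (s+1); rwa [show s+1+1 = s+2 by omega] at this
  unfold gg
  cases hs : F s <;> cases hs1 : F (s+1) <;> cases hs2 : F (s+2) <;> simp_all

private lemma blocks_le (F : ℕ → Bool)
    (h1 : ∀ j, F j = true → F (j+1) = false)
    (h2 : ∀ j, F j = true → F (j+2) = false) :
    ∀ m s, ∑ j ∈ Ico s (s + 3*m), gg F j ≤ m := by
  intro m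
  induction m with
  | zero => simp
  | succ m ih =>
    intro s
    have hsplit : ∑ j ∈ Ico s (s + 3*(m+1)), gg F j
        = ∑ j ∈ Ico s (s+3), gg F j + ∑ j ∈ Ico (s+3) (s+3 + 3*m), gg F j := by
      rw [show s + 3 + 3*m = s + 3*(m+1) by omega] at *
      exact (Finset.sum_Ico_consecutive _ (by omega) (by omega)).symm
    rw [hsplit]
    have := block_le F h1 h2 s
    have := ih (s+3)
    omega

private lemma window_inv (F : ℕ → Bool) (N : ℕ) (hper : ∀ j, F (j + N) = F j) :
    ∀ s, ∑ j ∈ Ico s (s + N), gg F j = ∑ j ∈ Ico 0 N, gg F j := by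
  intro s
  induction s with
  | zero => simp
  | succ s ih =>
    rw [← ih]
    have h1 : ∑ j ∈ Ico s (s + N) ∪ {s + N}, gg F j
        = ∑ j ∈ {s} ∪ Ico (s+1) (s+1+N), gg F j := by
      congr 1
      ext x
      simp [Finset.mem_Ico, Finset.mem_union, Finset.mem_singleton]
      omega
    rcases Nat.eq_zero_or_pos N with hN | hN
    · simp [hN]
    · rw [Finset.sum_union (by simp [Finset.mem_Ico]), Finset.sum_union (by simp [Finset.mem_Ico])] at h1
      have hg : gg F (s + N) = gg F s := by unfold gg; rw [hper s]
      simp only [Finset.sum_singleton] at h1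
      omega

private lemma count_as_sum (F : ℕ → Bool) (N : ℕ) :
    ((range N).filter (fun j => F j = true)).card = ∑ j ∈ Ico 0 N, gg F j := by
  rw [Finset.card_filter]
  rw [Finset.range_eq_Ico]
  rfl

private lemma key_count (m : ℕ) (hm : 1 ≤ m) (F : ℕ → Bool)
    (hper : ∀ j, F (j + 3*m) = F j)
    (h1 : ∀ j, F j = true → F (j+1) = false)
    (h2 : ∀ j, F j = true → F (j+2) = false) :
    ((range (3*m)).filter (fun j => F j = true)).card ≤ m ∧
    (((range (3*m)).filter (fun j => F j = true)).card = m ↔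
      ∃ r < 3, ∀ j < 3*m, F j = decide (j % 3 = r)) := by
  have hle : ((range (3*m)).filter (fun j => F j = true)).card ≤ m := by
    rw [count_as_sum]
    have := blocks_le F h1 h2 m 0
    simpa using this
  refine ⟨hle, ?_, ?_⟩
  · -- equality → exists r
    intro hcard
    have htot : ∑ j ∈ Ico 0 (3*m), gg F j = m := by
      rw [← count_as_sum]; exact hcard
    have hwin : ∀ s, ∑ j ∈ Ico s (s + 3*m), gg F j = m := by
      intro s; rw [window_inv F (3*m) hper s]; simpa using htot
    have hblock : ∀ s, ∑ j ∈ Ico s (s+3), gg F j = 1 := by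
      intro s
      have hsplit : ∑ j ∈ Ico s (s + 3*m), gg F j
          = ∑ j ∈ Ico s (s+3), gg F j + ∑ j ∈ Ico (s+3) (s+3 + 3*(m-1)), gg F j := by
        rw [show s + 3 + 3*(m-1) = s + 3*m by omega] at *
        exact (Finset.sum_Ico_consecutive _ (by omega) (by omega)).symm
      have hb := block_le F h1 h2 s
      have hrest := blocks_le F h1 h2 (m-1) (s+3)
      have := hwin s
      omega
    have hstep : ∀ j, F j = true → F (j+3) = true := by
      intro j hj
      have hb := hblock (j+1)
      rw [block_expand] at hb
      have e1 : F (j+1) = false := h1 j hj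
      have e2 : F (j+2) = false := by
        have := h2 j hj; rwa [show j+1+1 = j+2 by omega] at this
      rw [show j+1+2 = j+3 by omega, show j+1+1 = j+2 by omega] at hb
      unfold gg at hb
      rw [e1, e2] at hb
      simp at hb
      cases h3 : F (j+3)
      · rw [h3] at hb; simp at hb
      · rfl
    -- find r
    have hb0 := hblock 0
    rw [block_expand] at hb0
    have hex : ∃ r < 3, F r = true := by
      unfold gg at hb0
      cases h0 : F 0
      · cases hh1 : F 1
        · cases hh2 : F 2
          · rw [h0, hh1] at hb0; simp [hh2] at hb0
          · exact ⟨2, by omega, hh2⟩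
        · exact ⟨1, by omega, hh1⟩
      · exact ⟨0, by omega, h0⟩
    obtain ⟨r, hr3, hFr⟩ := hex
    have hchain : ∀ t, F (r + 3*t) = true := by
      intro t
      induction t with
      | zero => simpa using hFr
      | succ t ih =>
        have := hstep (r + 3*t) ih
        rwa [show r + 3*t + 3 = r + 3*(t+1) by omega] at this
    -- filter = image
    have himsub : (range m).image (fun t => 3*t + r) ⊆ (range (3*m)).filter (fun j => F j = true) := by
      intro x hx
      simp only [Finset.mem_image, Finset.mem_range] at hx
      obtain ⟨t, ht, rfl⟩ := hx
      simp only [Finset.mem_filter, Finset.mem_range]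
      constructor
      · omega
      · have := hchain t; rwa [show r + 3*t = 3*t + r by omega] at this
    have hinj : Function.Injective (fun t => 3*t + r) := by intro a b h; dsimp at h; omega
    have hcardim : ((range m).image (fun t => 3*t + r)).card = m := by
      rw [Finset.card_image_of_injective _ hinj, Finset.card_range]
    have heq : (range (3*m)).filter (fun j => F j = true) = (range m).image (fun t => 3*t + r) := by
      refine (Finset.eq_of_subset_of_card_le himsub (by omega)).symm
    refine ⟨r, hr3, ?_⟩
    intro j hj
    by_cases hmod : j % 3 = r
    · have hmem : j ∈ (range m).image (fun t => 3*t + r) := by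
        simp only [Finset.mem_image, Finset.mem_range]
        exact ⟨j / 3, by omega, by omega⟩
      rw [← heq] at hmem
      simp only [Finset.mem_filter] at hmem
      rw [hmem.2]
      simp [hmod]
    · have : F j = false := by
        cases hFj : F j
        · rfl
        · exfalso
          have hmem : j ∈ (range (3*m)).filter (fun j => F j = true) := by
            simp only [Finset.mem_filter, Finset.mem_range]; exact ⟨hj, hFj⟩
          rw [heq] at hmem
          simp only [Finset.mem_image, Finset.mem_range] at hmem
          obtain ⟨t, ht, rfl⟩ := hmem
          omega
      rw [this]
      simp [hmod]
  · -- exists r → equality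
    rintro ⟨r, hr3, hF⟩
    have heq : (range (3*m)).filter (fun j => F j = true) = (range m).image (fun t => 3*t + r) := by
      ext j
      simp only [Finset.mem_filter, Finset.mem_range, Finset.mem_image]
      constructor
      · rintro ⟨hj, hFj⟩
        rw [hF j hj] at hFj
        simp only [decide_eq_true_eq] at hFj
        exact ⟨j / 3, by omega, by omega⟩
      · rintro ⟨t, ht, rfl⟩
        refine ⟨by omega, ?_⟩
        rw [hF (3*t+r) (by omega)]
        simp [Nat.add_mul_mod_self_left]
        omega
    rw [heq, Finset.card_image_of_injective _ (by intro a b h; dsimp at h; omega : Function.Injective (fun t => 3*t + r)), Finset.card_range]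


def vtx (i j : ℕ) : Vert K L :=
  ⟨(((2*i + j % 2 : ℕ) : ZMod (2*K)), ((j : ℕ) : ZMod (6*L))), by
    rw [ZMod.val_natCast, ZMod.val_natCast]
    have h1 : (2*i + j % 2) % (2*K) % 2 = (2*i + j % 2) % 2 := Nat.mod_mod_of_dvd _ ⟨K, rfl⟩
    have h2 : j % (6*L) % 2 = j % 2 := Nat.mod_mod_of_dvd _ ⟨3*L, by ring⟩
    omega⟩

lemma vtx_col (i j : ℕ) : (vtx K L i j).1.2 = ((j : ℕ) : ZMod (6*L)) := rfl

lemma vtx_row (i j : ℕ) : (vtx K L i j).1.1 = ((2*i + j % 2 : ℕ) : ZMod (2*K)) := rfl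

lemma vtx_col_val (i j : ℕ) (hj : j < 6*L) : (vtx K L i j).1.2.val = j := by
  rw [vtx_col, ZMod.val_natCast, Nat.mod_eq_of_lt hj]

lemma vtx_per (i j : ℕ) : vtx K L i (j + 6*L) = vtx K L i j := by
  apply Subtype.ext
  apply Prod.ext
  · rw [vtx_row, vtx_row]
    congr 1
    omega
  · rw [vtx_col, vtx_col, Nat.cast_add, ZMod.natCast_self, add_zero]

lemma adj_one (i j : ℕ) : Adj K L (vtx K L i j) (vtx K L i (j+1)) := by
  right
  constructor
  · rw [vtx_row, vtx_row]
    rcases Nat.mod_two_eq_zero_or_one j with hj | hj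
    · left
      rw [show 2*i + (j+1) % 2 = (2*i + j % 2) + 1 by omega]
      push_cast
      ring
    · right
      rw [show 2*i + j % 2 = (2*i + (j+1) % 2) + 1 by omega]
      push_cast
      ring
  · left
    rw [vtx_col, vtx_col]
    push_cast
    ring

lemma adj_two (i j : ℕ) : Adj K L (vtx K L i j) (vtx K L i (j+2)) := by
  left
  constructor
  · rw [vtx_row, vtx_row, show 2*i + (j+2) % 2 = 2*i + j % 2 by omega]
  · left
    rw [vtx_col, vtx_col]
    push_cast
    ring

lemma vtx_mem_stripe (i j : ℕ) : inHStripe K L i (vtx K L i j) := by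
  rcases Nat.mod_two_eq_zero_or_one j with hj | hj
  · left
    rw [vtx_row, show 2*i + j % 2 = 2*i by omega]
  · right
    rw [vtx_row, show 2*i + j % 2 = 2*i + 1 by omega]

lemma vtx_eq_of_stripe (i : ℕ) (hi : i < K) (v : Vert K L) (hv : inHStripe K L i v) :
    vtx K L i v.1.2.val = v := by
  have hpar := v.2
  apply Subtype.ext
  have hcol : ((v.1.2.val : ℕ) : ZMod (6*L)) = v.1.2 := by
    rw [ZMod.natCast_val, ZMod.cast_id]
  rcases hv with hv | hv
  · have hval : v.1.1.val = 2*i := by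
      rw [hv, ZMod.val_natCast, Nat.mod_eq_of_lt (by omega)]
    have hev : v.1.2.val % 2 = 0 := by omega
    apply Prod.ext
    · rw [vtx_row, hev, Nat.add_zero, hv]
    · rw [vtx_col, hcol]
  · have hval : v.1.1.val = 2*i + 1 := by
      rw [hv, ZMod.val_natCast, Nat.mod_eq_of_lt (by omega)]
    have hod : v.1.2.val % 2 = 1 := by omega
    apply Prod.ext
    · rw [vtx_row, hod, hv]
    · rw [vtx_col, hcol]

lemma card_stripe_eq (i : ℕ) (hi : i < K) (σ : Vert K L → Bool) :
    ((univ : Finset (Vert K L)).filter fun v => inHStripe K L i v ∧ σ v = true).card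
      = ((range (6*L)).filter (fun j => σ (vtx K L i j) = true)).card := by
  apply Finset.card_bij' (fun v _ => v.1.2.val) (fun j _ => vtx K L i j)
  · intro v hv
    simp only [Finset.mem_filter, Finset.mem_univ, true_and] at hv
    simp only [Finset.mem_filter, Finset.mem_range]
    refine ⟨ZMod.val_lt _, ?_⟩
    rw [vtx_eq_of_stripe K L i hi v hv.1]
    exact hv.2
  · intro j hj
    simp only [Finset.mem_filter, Finset.mem_range] at hj
    simp only [Finset.mem_filter, Finset.mem_univ, true_and]
    exact ⟨vtx_mem_stripe K L i j, hj.2⟩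
  · intro v hv
    simp only [Finset.mem_filter, Finset.mem_univ, true_and] at hv
    exact vtx_eq_of_stripe K L i hi v hv.1
  · intro j hj
    simp only [Finset.mem_filter, Finset.mem_range] at hj
    exact vtx_col_val K L i j hj.1

/-- Efficient horizontal stripes: every hard-core configuration has at
most `2L` particles in each horizontal stripe `S_i`, with equality if and only if it has
a horizontal bridge in `S_i` (it agrees with one of `a`, `b`, `c` on `S_i`). -/
theorem efficient_horizontal_stripes (hK : 2 ≤ K) (hL : 1 ≤ L)
    (σ : Cfg K L) (hσ : HardCore K L σ) (i : ℕ) (hi : i < K) :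
    (((univ : Finset (Vert K L)).filter fun v => inHStripe K L i v ∧ σ v = true).card
        ≤ 2 * L) ∧
    ((((univ : Finset (Vert K L)).filter fun v => inHStripe K L i v ∧ σ v = true).card
        = 2 * L) ↔
      (agreesOn K L (inHStripe K L i) σ (confA K L) ∨
       agreesOn K L (inHStripe K L i) σ (confB K L) ∨
       agreesOn K L (inHStripe K L i) σ (confC K L))) := by
  have h6 : 3 * (2*L) = 6*L := by ring
  have h1 : ∀ j, σ (vtx K L i j) = true → σ (vtx K L i (j+1)) = false := by
    intro j hj
    have h := hσ _ _ (adj_one K L i j)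
    cases hw : σ (vtx K L i (j+1))
    · rfl
    · exact absurd ⟨hj, hw⟩ h
  have h2 : ∀ j, σ (vtx K L i j) = true → σ (vtx K L i (j+2)) = false := by
    intro j hj
    have h := hσ _ _ (adj_two K L i j)
    cases hw : σ (vtx K L i (j+2))
    · rfl
    · exact absurd ⟨hj, hw⟩ h
  have hper : ∀ j, σ (vtx K L i (j + 3*(2*L))) = σ (vtx K L i j) := by
    intro j
    rw [h6, vtx_per]
  have key := key_count (2*L) (by omega) (fun j => σ (vtx K L i j)) hper h1 h2
  rw [h6] at key
  have hcs := card_stripe_eq K L i hi σ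
  rw [hcs]
  refine ⟨key.1, key.2.trans ?_⟩
  constructor
  · rintro ⟨r, hr, hform⟩
    have hag : ∀ v, inHStripe K L i v → σ v = decide ((v.1.2).val % 3 = r) := by
      intro v hv
      have he := vtx_eq_of_stripe K L i hi v hv
      have hval : (v.1.2).val < 6*L := ZMod.val_lt _
      have hf := hform (v.1.2).val hval
      rwa [he] at hf
    interval_cases r
    · exact Or.inl hag
    · exact Or.inr (Or.inl hag)
    · exact Or.inr (Or.inr hag)
  · have hback : ∀ r, r < 3 → (∀ v, inHStripe K L i v → σ v = decide ((v.1.2).val % 3 = r)) →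
        ∃ r' < 3, ∀ j < 6*L, σ (vtx K L i j) = decide (j % 3 = r') := by
      intro r hr hag
      refine ⟨r, hr, ?_⟩
      intro j hj
      have := hag (vtx K L i j) (vtx_mem_stripe K L i j)
      rwa [vtx_col_val K L i j hj] at this
    rintro (hag | hag | hag)
    · exact hback 0 (by omega) hag
    · exact hback 1 (by omega) hag
    · exact hback 2 (by omega) hag
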